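/- (Deterministic relationship.) Assume Y takes at least one value y with p(y) > 0. If Y is a deterministic function of X and Y is not independent of X, then a sufficient condition for (X,Y) to be IB_β-learnable is β > 1. Combined with the necessary condition β > 1, the IB-learnability threshold is exactly β₀ = 1 in this case. -/

import Mathlib

open Filter Asymptotics
open scoped BigOperators Topology

/-- A joint probability distribution `p(x,y)` on finite types `X` and `Y`. -/
structure JointDist (X Y : Type) [Fintype X] [Fintype Y] where
  p : X → Y → ℝ
  nonneg : ∀ x y, 0 ≤ p x y
  sum_one : ∑ x, ∑ y, p x y = 1

variable {X Y Z : Type} [Fintype X] [Fintype Y] [Fintype Z]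

/-- The marginal distribution `p(x)` of `X`. -/
def JointDist.pX (P : JointDist X Y) (x : X) : ℝ := ∑ y, P.p x y

/-- The marginal distribution `p(y)` of `Y`. -/
def JointDist.pY (P : JointDist X Y) (y : Y) : ℝ := ∑ x, P.p x y

/-- An encoder: a conditional distribution `p(z|x)` specifying a representation `Z` of `X`;
together with `p(x,y)` it determines the Markov chain `Z ← X ↔ Y`. -/
structure Encoder (X Z : Type) [Fintype X] [Fintype Z] where
  c : X → Z → ℝ
  nonneg : ∀ x z, 0 ≤ c x z
  sum_one : ∀ x, ∑ z, c x z = 1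

/-- The mutual information `I(X;Z)` of the representation given by encoder `e`,
where `p(x,z) = p(x) p(z|x)` and `p(z) = ∑ x, p(x) p(z|x)`. -/
noncomputable def IXZ (P : JointDist X Y) (e : Encoder X Z) : ℝ :=
  ∑ x, ∑ z, P.pX x * e.c x z *
    Real.log (P.pX x * e.c x z / (P.pX x * ∑ x', P.pX x' * e.c x' z))

/-- The mutual information `I(Y;Z)`, using the Markov chain `Z ← X ↔ Y`,
i.e. `p(y,z) = ∑ x, p(x,y) p(z|x)`. -/
noncomputable def IYZ (P : JointDist X Y) (e : Encoder X Z) : ℝ :=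
  ∑ y, ∑ z, (∑ x, P.p x y * e.c x z) *
    Real.log ((∑ x, P.p x y * e.c x z) / (P.pY y * ∑ x, P.pX x * e.c x z))

/-- The Information Bottleneck objective `IB_β(X,Y;Z) = I(X;Z) − β·I(Y;Z)`. -/
noncomputable def IB (P : JointDist X Y) (β : ℝ) (e : Encoder X Z) : ℝ :=
  IXZ P e - β * IYZ P e

/-- `(X,Y)` is `IB_β`-learnable if some representation `Z` (given by some encoder `p₁(z|x)`)
achieves `IB_β(X,Y;Z) < 0`, where `0` is the value attained by the trivial representation
`p(z|x) = p(z)`. -/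
def IBLearnable (P : JointDist X Y) (β : ℝ) : Prop :=
  ∃ (n : ℕ) (e : Encoder X (Fin n)), IB P β e < 0

lemma logSum {ι : Type*} (s : Finset ι) (a b : ι → ℝ)
    (ha : ∀ i ∈ s, 0 ≤ a i) (hb : ∀ i ∈ s, 0 ≤ b i)
    (h0 : ∀ i ∈ s, b i = 0 → a i = 0) :
    (∑ i ∈ s, a i) * Real.log ((∑ i ∈ s, a i) / (∑ i ∈ s, b i)) ≤
      ∑ i ∈ s, a i * Real.log (a i / b i) := by
  set A := ∑ i ∈ s, a i with hA
  set B := ∑ i ∈ s, b i with hB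
  rcases eq_or_lt_of_le (Finset.sum_nonneg ha) with h | hApos
  · have hz : ∀ i ∈ s, a i = 0 := fun i hi =>
      (Finset.sum_eq_zero_iff_of_nonneg ha).mp h.symm i hi
    have hA0 : A = 0 := h.symm
    rw [hA0]
    have : ∀ i ∈ s, (0:ℝ) ≤ a i * Real.log (a i / b i) := by
      intro i hi; rw [hz i hi]; simp
    simpa using Finset.sum_nonneg this
  · have hBpos : 0 < B := by
      rcases eq_or_lt_of_le (Finset.sum_nonneg hb) with h | h
      · exfalso
        have hbz : ∀ i ∈ s, b i = 0 := fun i hi =>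
          (Finset.sum_eq_zero_iff_of_nonneg hb).mp h.symm i hi
        have : A = 0 := Finset.sum_eq_zero (fun i hi => h0 i hi (hbz i hi))
        linarith
      · exact h
    have key : ∀ i ∈ s, a i * Real.log (A / B) + (a i - b i * (A / B)) ≤
        a i * Real.log (a i / b i) := by
      intro i hi
      rcases eq_or_lt_of_le (ha i hi) with h | hai
      · rw [← h]
        have : 0 ≤ b i * (A / B) := mul_nonneg (hb i hi) (le_of_lt (div_pos hApos hBpos))
        simp; linarith
      · have hbi : 0 < b i := by
          rcases eq_or_lt_of_le (hb i hi) with h' | h'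
          · exfalso; have := h0 i hi h'.symm; linarith
          · exact h'
        have ht : 0 < b i * (A / B) / a i := by positivity
        have hlog := Real.log_le_sub_one_of_pos ht
        have hexp : Real.log (b i * (A / B) / a i) =
            Real.log (A / B) - Real.log (a i / b i) := by
          rw [Real.log_div (by positivity) (ne_of_gt hai),
              Real.log_mul (ne_of_gt hbi) (by positivity),
              Real.log_div (ne_of_gt hai) (ne_of_gt hbi)]
          ring
        rw [hexp] at hlog
        have := mul_le_mul_of_nonneg_left hlog (le_of_lt hai)
        have h2 : a i * (b i * (A / B) / a i) = b i * (A / B) := by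
          field_simp
        nlinarith
    calc A * Real.log (A / B) = ∑ i ∈ s, (a i * Real.log (A / B) + (a i - b i * (A / B))) := by
          rw [Finset.sum_add_distrib, ← Finset.sum_mul, Finset.sum_sub_distrib,
              ← Finset.sum_mul, ← hA, ← hB]
          field_simp; ring
      _ ≤ ∑ i ∈ s, a i * Real.log (a i / b i) := Finset.sum_le_sum key

lemma pX_nonneg (P : JointDist X Y) (x : X) : 0 ≤ P.pX x :=
  Finset.sum_nonneg fun y _ => P.nonneg x y

lemma pY_nonneg (P : JointDist X Y) (y : Y) : 0 ≤ P.pY y :=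
  Finset.sum_nonneg fun x _ => P.nonneg x y

lemma sum_pX_one (P : JointDist X Y) : ∑ x, P.pX x = 1 := P.sum_one

lemma sum_pY_one (P : JointDist X Y) : ∑ y, P.pY y = 1 := by
  simp only [JointDist.pY]; rw [Finset.sum_comm]; exact P.sum_one

lemma p_le_pX (P : JointDist X Y) (x : X) (y : Y) : P.p x y ≤ P.pX x :=
  Finset.single_le_sum (fun y' _ => P.nonneg x y') (Finset.mem_univ y)

lemma pY_le_one (P : JointDist X Y) (y : Y) : P.pY y ≤ 1 := by
  rw [← sum_pY_one P]
  exact Finset.single_le_sum (fun y' _ => pY_nonneg P y') (Finset.mem_univ y)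

lemma pZ_nonneg (P : JointDist X Y) (e : Encoder X Z) (z : Z) :
    0 ≤ ∑ x, P.pX x * e.c x z :=
  Finset.sum_nonneg fun x _ => mul_nonneg (pX_nonneg P x) (e.nonneg x z)

lemma sum_pZ_one (P : JointDist X Y) (e : Encoder X Z) :
    ∑ z, ∑ x, P.pX x * e.c x z = 1 := by
  rw [Finset.sum_comm]
  calc ∑ x, ∑ z, P.pX x * e.c x z = ∑ x, P.pX x * ∑ z, e.c x z := by
        simp [Finset.mul_sum]
    _ = 1 := by simp [e.sum_one, sum_pX_one P]

lemma pZ_zero (P : JointDist X Y) (e : Encoder X Z) (z : Z)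
    (h : ∑ x, P.pX x * e.c x z = 0) (x : X) : P.pX x * e.c x z = 0 :=
  (Finset.sum_eq_zero_iff_of_nonneg
    (fun x' _ => mul_nonneg (pX_nonneg P x') (e.nonneg x' z))).mp h x (Finset.mem_univ x)

lemma pY_zero (P : JointDist X Y) (y : Y) (h : P.pY y = 0) (x : X) : P.p x y = 0 :=
  (Finset.sum_eq_zero_iff_of_nonneg (fun x' _ => P.nonneg x' y)).mp h x (Finset.mem_univ x)

lemma pyz_zero (P : JointDist X Y) (e : Encoder X Z) (y : Y) (z : Z)
    (h : P.pY y * (∑ x, P.pX x * e.c x z) = 0) : (∑ x, P.p x y * e.c x z) = 0 := by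
  rcases mul_eq_zero.mp h with h | h
  · exact Finset.sum_eq_zero fun x _ => by rw [pY_zero P y h x, zero_mul]
  · refine Finset.sum_eq_zero fun x _ => ?_
    have h1 := pZ_zero P e z h x
    have h2 : P.p x y * e.c x z ≤ P.pX x * e.c x z :=
      mul_le_mul_of_nonneg_right (p_le_pX P x y) (e.nonneg x z)
    have h3 : 0 ≤ P.p x y * e.c x z := mul_nonneg (P.nonneg x y) (e.nonneg x z)
    linarith

lemma IYZ_nonneg (P : JointDist X Y) (e : Encoder X Z) : 0 ≤ IYZ P e := by
  have key := logSum (Finset.univ : Finset (Y × Z))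
    (fun p => ∑ x, P.p x p.1 * e.c x p.2)
    (fun p => P.pY p.1 * ∑ x, P.pX x * e.c x p.2)
    (fun p _ => Finset.sum_nonneg fun x _ => mul_nonneg (P.nonneg x p.1) (e.nonneg x p.2))
    (fun p _ => mul_nonneg (pY_nonneg P p.1) (pZ_nonneg P e p.2))
    (fun p _ h => pyz_zero P e p.1 p.2 h)
  have hsa : ∑ p : Y × Z, (∑ x, P.p x p.1 * e.c x p.2) = 1 := by
    rw [Fintype.sum_prod_type]
    have : ∀ y : Y, ∑ z : Z, ∑ x, P.p x y * e.c x z = P.pY y := by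
      intro y
      rw [Finset.sum_comm]
      calc ∑ x, ∑ z : Z, P.p x y * e.c x z = ∑ x, P.p x y * ∑ z, e.c x z := by
            simp [Finset.mul_sum]
        _ = P.pY y := by simp [e.sum_one, JointDist.pY]
    rw [Finset.sum_congr rfl fun y _ => this y]
    exact sum_pY_one P
  have hsb : ∑ p : Y × Z, (P.pY p.1 * ∑ x, P.pX x * e.c x p.2) = 1 := by
    rw [Fintype.sum_prod_type]
    calc ∑ y, ∑ z, P.pY y * ∑ x, P.pX x * e.c x z
        = ∑ y, P.pY y * ∑ z, ∑ x, P.pX x * e.c x z := by simp [Finset.mul_sum]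
      _ = 1 := by simp [sum_pZ_one P e, sum_pY_one P]
  rw [hsa, hsb] at key
  simp only [div_one, Real.log_one, mul_zero, one_mul] at key
  calc (0:ℝ) = 1 * Real.log (1/1) := by simp
    _ ≤ ∑ p : Y × Z, (∑ x, P.p x p.1 * e.c x p.2) *
          Real.log ((∑ x, P.p x p.1 * e.c x p.2) / (P.pY p.1 * ∑ x, P.pX x * e.c x p.2)) := by
        simpa [hsa, hsb] using key
    _ = IYZ P e := by rw [IYZ, Fintype.sum_prod_type]

lemma pY_fiber [DecidableEq Y] (P : JointDist X Y) (f : X → Y)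
    (hdet : ∀ x y, P.p x y = if y = f x then P.pX x else 0) (y : Y) :
    P.pY y = ∑ x ∈ Finset.univ.filter (fun x => f x = y), P.pX x := by
  rw [Finset.sum_filter, JointDist.pY]
  refine Finset.sum_congr rfl fun x _ => ?_
  rw [hdet x y]
  exact if_congr eq_comm rfl rfl

lemma sum_fiber_a [DecidableEq Y] (P : JointDist X Y) (f : X → Y)
    (hdet : ∀ x y, P.p x y = if y = f x then P.pX x else 0) (e : Encoder X Z)
    (y : Y) (z : Z) :
    ∑ x ∈ Finset.univ.filter (fun x => f x = y), P.pX x * e.c x z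
      = ∑ x, P.p x y * e.c x z := by
  rw [Finset.sum_filter]
  refine Finset.sum_congr rfl fun x _ => ?_
  rw [hdet x y]
  split_ifs with h1 h2 h3
  · rfl
  · exact absurd h1.symm h2
  · exact absurd h3.symm h1
  · rw [zero_mul]

lemma IYZ_le_IXZ [DecidableEq Y] (P : JointDist X Y) (f : X → Y)
    (hdet : ∀ x y, P.p x y = if y = f x then P.pX x else 0) (e : Encoder X Z) :
    IYZ P e ≤ IXZ P e := by
  rw [IYZ, IXZ, Finset.sum_comm (γ := X), Finset.sum_comm (γ := Y)]
  refine Finset.sum_le_sum fun z _ => ?_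
  rw [← Finset.sum_fiberwise (Finset.univ : Finset X) f
    (fun x => P.pX x * e.c x z *
      Real.log (P.pX x * e.c x z / (P.pX x * ∑ x', P.pX x' * e.c x' z)))]
  refine Finset.sum_le_sum fun y _ => ?_
  have key := logSum (Finset.univ.filter (fun x => f x = y))
    (fun x => P.pX x * e.c x z)
    (fun x => P.pX x * ∑ x', P.pX x' * e.c x' z)
    (fun x _ => mul_nonneg (pX_nonneg P x) (e.nonneg x z))
    (fun x _ => mul_nonneg (pX_nonneg P x) (pZ_nonneg P e z))
    (fun x _ h => by
      rcases mul_eq_zero.mp h with h | h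
      · simp only [h, zero_mul]
      · exact pZ_zero P e z h x)
  rw [sum_fiber_a P f hdet e y z] at key
  have hb : ∑ x ∈ Finset.univ.filter (fun x => f x = y),
      P.pX x * ∑ x', P.pX x' * e.c x' z
      = P.pY y * ∑ x', P.pX x' * e.c x' z := by
    rw [← Finset.sum_mul, ← pY_fiber P f hdet y]
  rw [hb] at key
  exact key

lemma p_le_pY (P : JointDist X Y) (x : X) (y : Y) : P.p x y ≤ P.pY y :=
  Finset.single_le_sum (fun x' _ => P.nonneg x' y) (Finset.mem_univ x)

lemma exists_py_between [DecidableEq Y] (P : JointDist X Y) (f : X → Y)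
    (hdet : ∀ x y, P.p x y = if y = f x then P.pX x else 0)
    (hy : ∃ y, 0 < P.pY y)
    (hdep : ¬ ∀ x y, P.p x y = P.pX x * P.pY y) :
    ∃ y, 0 < P.pY y ∧ P.pY y < 1 := by
  by_contra hcon
  push_neg at hcon
  obtain ⟨y0, hy0⟩ := hy
  have hy01 : P.pY y0 = 1 := le_antisymm (pY_le_one P y0) (hcon y0 hy0)
  have hrest : ∀ y, y ≠ y0 → P.pY y = 0 := by
    intro y hne
    have hsum : ∑ y' ∈ Finset.univ.erase y0, P.pY y' = 0 := by
      have := Finset.add_sum_erase Finset.univ P.pY (Finset.mem_univ y0)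
      rw [sum_pY_one P] at this
      linarith [hy01]
    exact (Finset.sum_eq_zero_iff_of_nonneg
      (fun y' _ => pY_nonneg P y')).mp hsum y (Finset.mem_erase.mpr ⟨hne, Finset.mem_univ y⟩)
  apply hdep
  intro x y
  rcases eq_or_lt_of_le (pX_nonneg P x) with hx | hx
  · have h1 : P.p x y = 0 := le_antisymm ((p_le_pX P x y).trans_eq hx.symm) (P.nonneg x y)
    rw [h1, ← hx, zero_mul]
  · have hpfx : P.pX x ≤ P.pY (f x) := by
      have : P.p x (f x) = P.pX x := by rw [hdet x (f x), if_pos rfl]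
      rw [← this]; exact p_le_pY P x (f x)
    have hfx : f x = y0 := by
      by_contra hne
      rw [hrest (f x) hne] at hpfx
      linarith
    rw [hdet x y, hfx]
    by_cases hyy : y = y0
    · rw [if_pos hyy, hyy, hy01, mul_one]
    · rw [if_neg hyy, hrest y hyy, mul_zero]

lemma suff_learnable [DecidableEq Y] (P : JointDist X Y) (f : X → Y)
    (hdet : ∀ x y, P.p x y = if y = f x then P.pX x else 0)
    (hy : ∃ y, 0 < P.pY y)
    (hdep : ¬ ∀ x y, P.p x y = P.pX x * P.pY y)
    (β : ℝ) (hβ : 1 < β) : IBLearnable P β := by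
  classical
  set g := Fintype.equivFin Y with hg
  refine ⟨Fintype.card Y,
    { c := fun x z => if z = g (f x) then 1 else 0
      nonneg := fun x z => by by_cases h : z = g (f x) <;> simp [h]
      sum_one := fun x => by simp }, ?_⟩
  set e : Encoder X (Fin (Fintype.card Y)) :=
    { c := fun x z => if z = g (f x) then 1 else 0
      nonneg := fun x z => by by_cases h : z = g (f x) <;> simp [h]
      sum_one := fun x => by simp } with he
  show IB P β e < 0
  have hc : ∀ x z, e.c x z = if z = g (f x) then 1 else 0 := fun x z => rfl
  -- the marginal of Z
  have hpZ : ∀ z, (∑ x', P.pX x' * e.c x' z) = P.pY (g.symm z) := by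
    intro z
    have : P.pY (g.symm z) = ∑ x', if g.symm z = f x' then P.pX x' else 0 :=
      Finset.sum_congr rfl fun x' _ => hdet x' (g.symm z)
    rw [this]
    refine Finset.sum_congr rfl fun x' _ => ?_
    rw [hc, mul_ite, mul_one, mul_zero]
    exact if_congr (by rw [Equiv.symm_apply_eq]) rfl rfl
  set H : ℝ := ∑ y, -(P.pY y * Real.log (P.pY y)) with hH
  -- I(X;Z) = H(Y)
  have hIXZ : IXZ P e = H := by
    rw [IXZ]
    have hinner : ∀ x, (∑ z, P.pX x * e.c x z *
        Real.log (P.pX x * e.c x z / (P.pX x * ∑ x', P.pX x' * e.c x' z)))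
        = -(P.pX x * Real.log (P.pY (f x))) := by
      intro x
      have step1 : ∀ z, P.pX x * e.c x z *
          Real.log (P.pX x * e.c x z / (P.pX x * ∑ x', P.pX x' * e.c x' z))
          = if z = g (f x) then
              P.pX x * Real.log (P.pX x / (P.pX x * P.pY (f x))) else 0 := by
        intro z
        rw [hc, hpZ]
        split_ifs with hz
        · rw [hz, Equiv.symm_apply_apply, mul_one]
        · rw [mul_zero, zero_mul]
      rw [Finset.sum_congr rfl fun z _ => step1 z, Finset.sum_ite_eq',
          if_pos (Finset.mem_univ _)]
      rcases eq_or_lt_of_le (pX_nonneg P x) with hx | hx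
      · rw [← hx]; ring
      · have hpy : 0 < P.pY (f x) := by
          have h1 : P.p x (f x) = P.pX x := by rw [hdet x (f x), if_pos rfl]
          have := p_le_pY P x (f x)
          linarith [h1 ▸ this]
        have harg : P.pX x / (P.pX x * P.pY (f x)) = (P.pY (f x))⁻¹ := by
          field_simp
        rw [harg, Real.log_inv]; ring
    rw [Finset.sum_congr rfl fun x _ => hinner x,
        ← Finset.sum_fiberwise (Finset.univ : Finset X) f
          (fun x => -(P.pX x * Real.log (P.pY (f x))))]
    refine Finset.sum_congr rfl fun y _ => ?_
    calc ∑ x ∈ Finset.univ.filter (fun x => f x = y),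
          -(P.pX x * Real.log (P.pY (f x)))
        = ∑ x ∈ Finset.univ.filter (fun x => f x = y),
          -(P.pX x * Real.log (P.pY y)) := by
          refine Finset.sum_congr rfl fun x hx => ?_
          rw [(Finset.mem_filter.mp hx).2]
      _ = -((∑ x ∈ Finset.univ.filter (fun x => f x = y), P.pX x) *
            Real.log (P.pY y)) := by
          rw [Finset.sum_mul, Finset.sum_neg_distrib]
      _ = -(P.pY y * Real.log (P.pY y)) := by rw [← pY_fiber P f hdet y]
  -- I(Y;Z) = H(Y)
  have hA : ∀ y z, (∑ x, P.p x y * e.c x z) = if z = g y then P.pY y else 0 := by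
    intro y z
    by_cases hz : z = g y
    · rw [if_pos hz, JointDist.pY]
      refine Finset.sum_congr rfl fun x _ => ?_
      rw [hc, hdet]
      by_cases hxy : y = f x
      · rw [if_pos hxy, if_pos (by rw [hz, hxy]), mul_one]
      · rw [if_neg hxy, zero_mul]
    · rw [if_neg hz]
      refine Finset.sum_eq_zero fun x _ => ?_
      rw [hc, hdet]
      by_cases hxy : y = f x
      · rw [if_pos hxy, if_neg (show ¬z = g (f x) by rw [← hxy]; exact hz), mul_zero]
      · rw [if_neg hxy, zero_mul]
  have hIYZ : IYZ P e = H := by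
    rw [IYZ]
    refine Finset.sum_congr rfl fun y _ => ?_
    have step1 : ∀ z, (∑ x, P.p x y * e.c x z) *
        Real.log ((∑ x, P.p x y * e.c x z) / (P.pY y * ∑ x, P.pX x * e.c x z))
        = if z = g y then
            P.pY y * Real.log (P.pY y / (P.pY y * P.pY y)) else 0 := by
      intro z
      rw [hA, hpZ]
      split_ifs with hz
      · rw [hz, Equiv.symm_apply_apply]
      · rw [zero_mul]
    rw [Finset.sum_congr rfl fun z _ => step1 z, Finset.sum_ite_eq',
        if_pos (Finset.mem_univ _)]
    rcases eq_or_lt_of_le (pY_nonneg P y) with hpy | hpy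
    · rw [← hpy]; ring
    · have harg : P.pY y / (P.pY y * P.pY y) = (P.pY y)⁻¹ := by field_simp
      rw [harg, Real.log_inv]; ring
  -- H(Y) > 0
  have hHpos : 0 < H := by
    obtain ⟨y1, hy1, hy1'⟩ := exists_py_between P f hdet hy hdep
    refine Finset.sum_pos' (fun y _ => ?_) ⟨y1, Finset.mem_univ y1, ?_⟩
    · have := Real.log_nonpos (pY_nonneg P y) (pY_le_one P y)
      nlinarith [pY_nonneg P y]
    · have := Real.log_neg hy1 hy1'
      nlinarith
  rw [IB, hIXZ, hIYZ]
  nlinarith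

/-- (Deterministic relationship.) Assume `Y` takes at least one value `y` with
`p(y) > 0`. If `Y` is a deterministic function of `X` (i.e. `p(x,y) = p(x)` if `y = f(x)` and
`0` otherwise) and `Y` is not independent of `X`, then `β > 1` is sufficient for `(X,Y)` to be
`IB_β`-learnable; combined with the necessary condition `β > 1`, the learnability threshold is
exactly `β₀ = 1`. -/
theorem IBLearnable_iff_beta_gt_one_of_deterministic [DecidableEq Y]
    (P : JointDist X Y) (f : X → Y)
    (hdet : ∀ x y, P.p x y = if y = f x then P.pX x else 0)
    (hy : ∃ y, 0 < P.pY y)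
    (hdep : ¬ ∀ x y, P.p x y = P.pX x * P.pY y) :
    (∀ β : ℝ, 1 < β → IBLearnable P β) ∧ ∀ β : ℝ, β ≤ 1 → ¬ IBLearnable P β := by
  constructor
  · exact fun β hβ => suff_learnable P f hdet hy hdep β hβ
  · intro β hβ hlearn
    obtain ⟨n, e, hIB⟩ := hlearn
    have h1 := IYZ_nonneg P e
    have h2 := IYZ_le_IXZ P f hdet e
    rw [IB] at hIB
    nlinarith [mul_nonneg (sub_nonneg.mpr hβ) h1]
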